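/- arXiv:1403.4210 — 2 statements merged into one kernel-verified Lean document; each statement's English description precedes it below -/
import Mathlib

section
/- Let (M,g) be a Kähler manifold and p ∈ M. The function η(p), defined as the maximum dimension of a complex linear subspace L ⊆ T_pM on which the holomorphic sectional curvature H vanishes on all nonzero vectors, is upper semicontinuous in p; consequently the set {p ∈ M : η(p) = min_q η(q)} is open in the classical topology. -/
/-!
`y ≤ η p` iff some orthonormal `y`-frame spans a subspace on whose nonzero vectors `H p`
vanishes. Orthonormal frames form a compact set and the vanishing condition is closed jointly in
the frame and the point, so projecting away the compact factor shows that `{p | y ≤ η p}` is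
closed, which is upper semicontinuity. For an `ℕ`-valued upper semicontinuous function,
`{η = min η} = {η < min η + 1}` is open.
-/

open Module Set

section VanishingSubspace

variable (𝕜 : Type*) [DivisionRing 𝕜] {V W : Type*} [AddCommGroup V] [Module 𝕜 V]
  [AddCommGroup W] [Module 𝕜 W]

def vanishingDims (f : V → ℝ) : Set ℕ :=
  {k | ∃ L : Submodule 𝕜 V, finrank 𝕜 L = k ∧ ∀ v ∈ L, v ≠ 0 → f v = 0}

def HasVanishingSubspace (f : V → ℝ) (y : ℕ) : Prop :=
  ∃ L : Submodule 𝕜 V, y ≤ finrank 𝕜 L ∧ ∀ v ∈ L, v ≠ 0 → f v = 0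

variable {𝕜}

theorem le_sSup_vanishingDims_iff [FiniteDimensional 𝕜 V] (f : V → ℝ) (y : ℕ) :
    y ≤ sSup (vanishingDims 𝕜 f) ↔ HasVanishingSubspace 𝕜 f y := by
  have hbdd : BddAbove (vanishingDims 𝕜 f) :=
    ⟨finrank 𝕜 V, by rintro _ ⟨L, rfl, -⟩; exact L.finrank_le⟩
  constructor
  · intro hy
    have hzero : 0 ∈ vanishingDims 𝕜 f := ⟨⊥, finrank_bot 𝕜 V, fun v hv hv0 => absurd hv hv0⟩
    obtain ⟨L, hL, hf⟩ := Nat.sSup_mem ⟨0, hzero⟩ hbdd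
    exact ⟨L, hL ▸ hy, hf⟩
  · rintro ⟨L, hy, hf⟩
    exact hy.trans (le_csSup hbdd ⟨L, rfl, hf⟩)

theorem hasVanishingSubspace_comp_linearEquiv_iff (e : V ≃ₗ[𝕜] W) (f : W → ℝ) (y : ℕ) :
    HasVanishingSubspace 𝕜 (f ∘ e) y ↔ HasVanishingSubspace 𝕜 f y := by
  constructor
  · rintro ⟨L, hy, hf⟩
    refine ⟨L.map (e : V →ₗ[𝕜] W), (LinearEquiv.finrank_map_eq e L).symm ▸ hy, ?_⟩
    rintro _ ⟨v, hv, rfl⟩ hv0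
    exact hf v hv (by simpa using hv0)
  · rintro ⟨L, hy, hf⟩
    refine ⟨L.map (e.symm : W →ₗ[𝕜] V), (LinearEquiv.finrank_map_eq e.symm L).symm ▸ hy, ?_⟩
    rintro _ ⟨w, hw, rfl⟩ hw0
    simpa using hf w hw (by simpa using hw0)

end VanishingSubspace

section Orthonormal

variable {𝕜 E : Type*} [RCLike 𝕜] [NormedAddCommGroup E] [InnerProductSpace 𝕜 E]

theorem hasVanishingSubspace_iff_exists_orthonormal [FiniteDimensional 𝕜 E] (f : E → ℝ)
    (y : ℕ) : HasVanishingSubspace 𝕜 f y ↔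
      ∃ v : Fin y → E, Orthonormal 𝕜 v ∧ ∀ c : Fin y → 𝕜, c ≠ 0 → f (∑ i, c i • v i) = 0 := by
  constructor
  · rintro ⟨L, hy, hf⟩
    let b := stdOrthonormalBasis 𝕜 L
    let ι := Fin.castLE hy
    have hbι : Orthonormal 𝕜 (b ∘ ι) := b.orthonormal.comp ι (Fin.castLE_injective _)
    refine ⟨fun i => (b (ι i) : E), ?_, fun c hc => ?_⟩
    · exact hbι.comp_linearIsometry L.subtypeₗᵢ
    · have hsum : ∑ i, c i • (b (ι i) : E) = ((∑ i, c i • b (ι i) : L) : E) := by simp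
      rw [hsum]
      refine hf _ (Submodule.coe_mem _) ?_
      rw [ne_eq, ZeroMemClass.coe_eq_zero]
      exact fun h0 => hc (funext (Fintype.linearIndependent_iff.mp hbι.linearIndependent c h0))
  · rintro ⟨v, hv, hf⟩
    refine ⟨Submodule.span 𝕜 (range v), by rw [finrank_span_eq_card hv.linearIndependent,
      Fintype.card_fin], ?_⟩
    intro u hu hu0
    obtain ⟨c, rfl⟩ := (Submodule.mem_span_range_iff_exists_fun 𝕜).mp hu
    exact hf c (by rintro rfl; simp at hu0)

theorem isCompact_setOf_orthonormal [FiniteDimensional 𝕜 E] (ι : Type*) [Fintype ι] :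
    IsCompact {v : ι → E | Orthonormal 𝕜 v} := by
  classical
  have := FiniteDimensional.proper_rclike 𝕜 E
  refine Metric.isCompact_of_isClosed_isBounded (α := ι → E) ?_ ?_
  · have hset : {v : ι → E | Orthonormal 𝕜 v} =
        ⋂ (i) (j), {v | inner 𝕜 (v i) (v j) = if i = j then 1 else 0} := by
      ext v
      simp [orthonormal_iff_ite]
    exact hset ▸ isClosed_iInter fun i => isClosed_iInter fun j =>
      isClosed_eq ((continuous_apply i).inner (continuous_apply j)) continuous_const
  · refine (Metric.isBounded_closedBall (x := (0 : ι → E)) (r := 1)).subset fun v hv => ?_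
    rw [Metric.mem_closedBall, dist_zero_right]
    exact (pi_norm_le_iff_of_nonneg zero_le_one).mpr fun i => (hv.1 i).le

end Orthonormal

section Semicontinuity

variable {𝕜 : Type*} [RCLike 𝕜] {M : Type*} [TopologicalSpace M]

theorem isClosed_setOf_hasVanishingSubspace_of_innerProductSpace {E : Type*}
    [NormedAddCommGroup E] [InnerProductSpace 𝕜 E] [FiniteDimensional 𝕜 E] {H : M → E → ℝ}
    (hH : Continuous fun q : M × E => H q.1 q.2) (y : ℕ) :
    IsClosed {p | HasVanishingSubspace 𝕜 (H p) y} := by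
  let F := {v : Fin y → E | Orthonormal 𝕜 v}
  have : CompactSpace F := isCompact_iff_compactSpace.mp (isCompact_setOf_orthonormal _)
  let C : Set (F × M) :=
    ⋂ (c : Fin y → 𝕜) (_ : c ≠ 0), {z | H z.2 (∑ i, c i • (z.1 : Fin y → E) i) = 0}
  have hC : IsClosed C := isClosed_biInter fun c _ => isClosed_eq
    (hH.comp (f := fun z : F × M => (z.2, ∑ i, c i • (z.1 : Fin y → E) i))
      (continuous_snd.prodMk (continuous_finsetSum _ fun i _ =>
        ((continuous_apply i).comp (continuous_subtype_val.comp continuous_fst)).const_smul (c i))))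
    continuous_const
  convert isClosedMap_snd_of_compactSpace C hC using 1
  ext p
  simp only [mem_ofPred_eq, hasVanishingSubspace_iff_exists_orthonormal, mem_image, C,
    mem_iInter]
  exact ⟨fun ⟨v, hv, hf⟩ => ⟨(⟨v, hv⟩, p), hf, rfl⟩, fun ⟨⟨v, q⟩, hf, hq⟩ => hq ▸ ⟨v, v.2, hf⟩⟩

theorem isClosed_setOf_hasVanishingSubspace {V : Type*} [NormedAddCommGroup V]
    [NormedSpace 𝕜 V] [FiniteDimensional 𝕜 V] {H : M → V → ℝ}
    (hH : Continuous fun q : M × V => H q.1 q.2) (y : ℕ) :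
    IsClosed {p | HasVanishingSubspace 𝕜 (H p) y} := by
  let e : EuclideanSpace 𝕜 (Fin (finrank 𝕜 V)) ≃L[𝕜] V :=
    ContinuousLinearEquiv.ofFinrankEq finrank_euclideanSpace_fin
  have hHe : Continuous fun q : M × EuclideanSpace 𝕜 (Fin (finrank 𝕜 V)) => H q.1 (e q.2) :=
    hH.comp (continuous_fst.prodMk (e.continuous.comp continuous_snd))
  simpa only [← hasVanishingSubspace_comp_linearEquiv_iff e.toLinearEquiv (H _),
    Function.comp_def, ContinuousLinearEquiv.coe_toLinearEquiv]
    using isClosed_setOf_hasVanishingSubspace_of_innerProductSpace (H := fun p x => H p (e x)) hHe y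

theorem UpperSemicontinuous.isOpen_setOf_eq_iInf {η : M → ℕ} (hη : UpperSemicontinuous η) :
    IsOpen {p | η p = ⨅ q, η q} := by
  have hmin : {p | η p = ⨅ q, η q} = η ⁻¹' Iio ((⨅ q, η q) + 1) := by
    ext p
    simp only [mem_ofPred_eq, mem_preimage, mem_Iio, Nat.lt_succ_iff]
    exact ⟨le_of_eq, fun h => h.antisymm (ciInf_le (OrderBot.bddBelow _) p)⟩
  exact hmin ▸ hη.isOpen_preimage _

end Semicontinuity

theorem stmt2 (n : ℕ) (M : Type) [TopologicalSpace M]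
    (H : M → (Fin n → ℂ) → ℝ)          -- holomorphic sectional curvature
    (hH : Continuous fun q : M × (Fin n → ℂ) => H q.1 q.2)
    (η : M → ℕ)
    (hη : ∀ p, η p = sSup {k | ∃ L : Submodule ℂ (Fin n → ℂ),
        Module.finrank ℂ ↥L = k ∧ ∀ v ∈ L, v ≠ 0 → H p v = 0}) :
    UpperSemicontinuous η ∧ IsOpen {p | η p = ⨅ q, η q} := by
  have hη' : ∀ p, η p = sSup (vanishingDims ℂ (H p)) := hη
  have husc : UpperSemicontinuous η := by
    refine upperSemicontinuous_iff_isClosed_preimage.mpr fun y => ?_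
    simpa only [preimage, mem_Ici, hη', le_sSup_vanishingDims_iff]
      using isClosed_setOf_hasVanishingSubspace hH y
  exact ⟨husc, husc.isOpen_setOf_eq_iInf⟩
end

section
/- Let N be a compact Riemann surface and u : N → ℝ a smooth nonnegative function, not identically zero, such that log u is subharmonic on the open set where u > 0 and u vanishes only on a finite set. Then u is a positive constant. -/
/-!
At a maximum point `x₀` of `u` we have `u x₀ > 0`, so `log u` is defined and continuous near
`x₀` and, in a chart, has a local maximum there. A continuous function bounded above by `a` on a
circle whose average is at least `a` equals `a` on that circle; the submean inequality therefore
makes `log u` constant on a small disc around `x₀`. Hence `{u = u x₀}` is open as well as closed,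
and by connectedness it is all of `N`.
-/

/-- The submean inequality for a function `g` on ℂ at the point `z`: for all
sufficiently small radii r, the value at z is at most the average of g on the
circle of radius r about z. -/
def SubmeanAt (g : ℂ → ℝ) (z : ℂ) : Prop :=
  ∃ R, 0 < R ∧ ∀ r : ℝ, 0 < r → r < R →
    g z ≤ (2 * Real.pi)⁻¹ *
      ∫ θ in (0:ℝ)..(2 * Real.pi), g (z + r * Complex.exp (θ * Complex.I))

open Set Filter Topology Metric Real

theorem submeanAt_iff_le_circleAverage {g : ℂ → ℝ} {z : ℂ} :
    SubmeanAt g z ↔ ∃ R, 0 < R ∧ ∀ r : ℝ, 0 < r → r < R → g z ≤ circleAverage g z r :=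
  Iff.rfl

theorem eqOn_sphere_of_le_circleAverage {f : ℂ → ℝ} {c : ℂ} {r a : ℝ}
    (hf : ContinuousOn f (sphere c |r|)) (hle : ∀ w ∈ sphere c |r|, f w ≤ a)
    (hav : a ≤ circleAverage f c r) : EqOn f (fun _ ↦ a) (sphere c |r|) := by
  rw [← image_circleMap_Ioc]
  rintro _ ⟨θ, hθ, rfl⟩
  by_contra hne
  have hcont : ContinuousOn (fun t ↦ f (circleMap c r t)) (Icc 0 (2 * π)) :=
    (hf.comp_continuous (continuous_circleMap c r) (circleMap_mem_sphere' c r)).continuousOn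
  have hlt : ∫ t in (0 : ℝ)..2 * π, f (circleMap c r t) < ∫ _ in (0 : ℝ)..2 * π, a :=
    intervalIntegral.integral_lt_integral_of_continuousOn_of_le_of_exists_lt two_pi_pos hcont
      continuousOn_const (fun t _ ↦ hle _ (circleMap_mem_sphere' c r t))
      ⟨θ, Ioc_subset_Icc_self hθ, lt_of_le_of_ne (hle _ (circleMap_mem_sphere' c r θ)) hne⟩
  rw [intervalIntegral.integral_const, smul_eq_mul] at hlt
  have : circleAverage f c r < a := by
    rw [circleAverage_def, smul_eq_mul]
    calc (2 * π)⁻¹ * ∫ t in (0 : ℝ)..2 * π, f (circleMap c r t)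
        < (2 * π)⁻¹ * ((2 * π - 0) * a) := by gcongr
      _ = a := by field_simp; ring
  exact (this.trans_le hav).false

theorem SubmeanAt.eventually_eq_of_isLocalMax {g : ℂ → ℝ} {z : ℂ} (hsub : SubmeanAt g z)
    (hmax : IsLocalMax g z) (hcont : ∀ᶠ w in 𝓝 z, ContinuousAt g w) :
    ∀ᶠ w in 𝓝 z, g w = g z := by
  obtain ⟨R, hR, hav⟩ := submeanAt_iff_le_circleAverage.mp hsub
  obtain ⟨ρ, hρ, hball⟩ := eventually_nhds_iff_ball.mp (hmax.and hcont)
  filter_upwards [ball_mem_nhds z (lt_min hR hρ)] with w hw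
  rcases eq_or_ne w z with rfl | hwz
  · rfl
  set r := dist w z
  have hr : 0 < r := dist_pos.mpr hwz
  have hrR : r < min R ρ := hw
  have hsphere : sphere z |r| ⊆ ball z ρ := fun v hv ↦ by
    rw [mem_sphere, abs_of_pos hr] at hv
    exact mem_ball.mpr (hv.trans_lt (hrR.trans_le (min_le_right _ _)))
  refine eqOn_sphere_of_le_circleAverage (fun v hv ↦ (hball v (hsphere hv)).2.continuousWithinAt)
    (fun v hv ↦ (hball v (hsphere hv)).1) (hav r hr (hrR.trans_le (min_le_left _ _))) ?_
  rw [mem_sphere, abs_of_pos hr]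

theorem eventually_eq_of_isLocalMax_of_submeanAt_log {N : Type*} [TopologicalSpace N]
    [ChartedSpace ℂ N] {u : N → ℝ} {x : N} (hu : ∀ᶠ y in 𝓝 x, ContinuousAt u y)
    (hmax : IsLocalMax u x) (hpos : 0 < u x)
    (hsub : SubmeanAt (fun z ↦ log (u ((chartAt ℂ x).symm z))) (chartAt ℂ x x)) :
    ∀ᶠ y in 𝓝 x, u y = u x := by
  set φ := chartAt ℂ x
  have hx : x ∈ φ.source := mem_chart_source ℂ x
  have hsymm : Tendsto φ.symm (𝓝 (φ x)) (𝓝 x) := φ.tendsto_symm hx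
  have hupos : ∀ᶠ y in 𝓝 x, 0 < u y := hu.self_of_nhds.eventually (lt_mem_nhds hpos)
  have hlog : ∀ᶠ w in 𝓝 (φ x), log (u (φ.symm w)) = log (u (φ.symm (φ x))) := by
    refine hsub.eventually_eq_of_isLocalMax ?_ ?_
    · filter_upwards [hsymm.eventually hmax, hsymm.eventually hupos] with w hle hw
      rw [φ.left_inv hx]
      exact log_le_log hw hle
    · filter_upwards [hsymm.eventually hu, hsymm.eventually hupos,
        φ.open_target.mem_nhds (mem_chart_target ℂ x)] with w hcu hw hwt
      exact (hcu.comp (φ.continuousAt_symm hwt)).log hw.ne'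
  filter_upwards [(φ.continuousAt hx).eventually hlog, φ.eventually_left_inverse hx, hupos]
    with y hy hinv hy'
  rw [hinv, φ.left_inv hx] at hy
  exact log_injOn_pos hy' hpos hy

theorem stmt6_general (N : Type) [TopologicalSpace N] [CompactSpace N] [ConnectedSpace N]
    [ChartedSpace ℂ N]        -- N is a (compact, connected) Riemann surface
    (u : N → ℝ) (hu : Continuous u)
    (h0 : ∀ x, 0 ≤ u x)                 -- u is nonnegative
    (hne : ∃ x, u x ≠ 0)                -- u is not identically zero
    -- log u is subharmonic on {u > 0} (submean inequality in the charts):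
    (hsub : ∀ x, u x ≠ 0 →
      SubmeanAt (fun z => Real.log (u ((chartAt ℂ x).symm z))) (chartAt ℂ x x)) :
    ∃ c : ℝ, 0 < c ∧ ∀ x, u x = c := by
  obtain ⟨x₀, -, hmax⟩ := isCompact_univ.exists_isMaxOn univ_nonempty hu.continuousOn
  obtain ⟨y, hy⟩ := hne
  have hpos : 0 < u x₀ := ((h0 y).lt_of_ne' hy).trans_le (hmax (mem_univ y))
  have hopen : IsOpen {x | u x = u x₀} := isOpen_iff_mem_nhds.mpr fun x (hx : u x = u x₀) ↦ by
    have hxpos : 0 < u x := hx ▸ hpos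
    have hxmax : IsLocalMax u x := .of_forall fun y ↦ hx ▸ hmax (mem_univ y)
    have := eventually_eq_of_isLocalMax_of_submeanAt_log
      (.of_forall fun _ ↦ hu.continuousAt) hxmax hxpos (hsub x hxpos.ne')
    rwa [hx] at this
  have hall : {x | u x = u x₀} = univ :=
    IsClopen.eq_univ ⟨isClosed_eq hu continuous_const, hopen⟩ ⟨x₀, rfl⟩
  exact ⟨u x₀, hpos, eq_univ_iff_forall.mp hall⟩

theorem stmt6 (N : Type) [TopologicalSpace N] [CompactSpace N] [ConnectedSpace N]
    [ChartedSpace ℂ N]        -- N is a (compact, connected) Riemann surface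
    (u : N → ℝ) (hu : Continuous u)
    (h0 : ∀ x, 0 ≤ u x)                 -- u is nonnegative
    (hne : ∃ x, u x ≠ 0)                -- u is not identically zero
    (hfin : {x | u x = 0}.Finite)       -- u vanishes only on a finite set
    -- log u is subharmonic on {u > 0} (submean inequality in the charts):
    (hsub : ∀ x, u x ≠ 0 →
      SubmeanAt (fun z => Real.log (u ((chartAt ℂ x).symm z))) (chartAt ℂ x x)) :
    ∃ c : ℝ, 0 < c ∧ ∀ x, u x = c :=
  stmt6_general N u hu h0 hne hsub
end
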